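/- arXiv:1507.08987 — 6 statements merged into one kernel-verified Lean document; each statement's English description precedes it below -/
import Mathlib

section
/- Let (X, d, ≤) be an ordered metric space with (X, d) complete, and let f, g be self-maps on X such that: (i) f(X) ⊆ g(X); (ii) f is g-comparable; (iii) the pair (f, g) is compatible; (iv) g is continuous; (v) either f is continuous or (X, d, ≤) has the g-TCC property; (vi) there exists x₀ ∈ X with g(x₀) ≺≻ f(x₀); (vii) there exists α ∈ [0,1) such that d(f(x), f(y)) ≤ α·d(g(x), g(y)) for all x, y ∈ X with g(x) ≺≻ g(y). Then f and g have a coincidence point, i.e., there exists z ∈ X with g(z) = f(z). -/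
open Filter Topology

section

variable {X : Type*} [MetricSpace X] [PartialOrder X]

/-- Two elements of an ordered set are comparable. -/
def Cmp (x y : X) : Prop := x ≤ y ∨ y ≤ x

/-- `f` is `g`-comparable: `g x ≺≻ g y` implies `f x ≺≻ f y`. -/
def GComparable (f g : X → X) : Prop :=
  ∀ x y : X, Cmp (g x) (g y) → Cmp (f x) (f y)

/-- The `g`-TCC property of an ordered metric space. -/
def GTCC (g : X → X) : Prop :=
  ∀ (x : ℕ → X) (l : X), (∀ n, Cmp (x n) (x (n + 1))) →
    Tendsto x atTop (𝓝 l) →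
      ∃ φ : ℕ → ℕ, StrictMono φ ∧ ∀ k, Cmp (g (x (φ k))) (g l)

/-- The TCC property of a subset of an ordered metric space. -/
def TCCOn (Y : Set X) : Prop :=
  ∀ (x : ℕ → X), (∀ n, x n ∈ Y) → ∀ l ∈ Y, (∀ n, Cmp (x n) (x (n + 1))) →
    Tendsto x atTop (𝓝 l) →
      ∃ φ : ℕ → ℕ, StrictMono φ ∧ ∀ k, Cmp (x (φ k)) l

/-- The TCC property of an ordered metric space. -/
def TCC (X : Type*) [MetricSpace X] [PartialOrder X] : Prop :=
  ∀ (x : ℕ → X) (l : X), (∀ n, Cmp (x n) (x (n + 1))) →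
    Tendsto x atTop (𝓝 l) →
      ∃ φ : ℕ → ℕ, StrictMono φ ∧ ∀ k, Cmp (x (φ k)) l

/-- The pair `(f, g)` is compatible. -/
def Compatible (f g : X → X) : Prop :=
  ∀ (x : ℕ → X) (l : X), Tendsto (fun n => g (x n)) atTop (𝓝 l) →
    Tendsto (fun n => f (x n)) atTop (𝓝 l) →
      Tendsto (fun n => dist (g (f (x n))) (f (g (x n)))) atTop (𝓝 0)

/-- `f` is `g`-continuous. -/
def GContinuous (f g : X → X) : Prop :=
  ∀ (x : ℕ → X) (a : X), Tendsto (fun n => g (x n)) atTop (𝓝 (g a)) →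
    Tendsto (fun n => f (x n)) atTop (𝓝 (f a))

/-- There exists a `≺≻`-chain between `a` and `b` inside `E`. -/
def ChainIn (E : Set X) (a b : X) : Prop :=
  ∃ (k : ℕ) (e : ℕ → X), 2 ≤ k ∧ (∀ i < k, e i ∈ E) ∧ e 0 = a ∧ e (k - 1) = b ∧
    ∀ i, i + 1 < k → Cmp (e i) (e (i + 1))

end

/-! Since `f(X) ⊆ g(X)`, a point with `g x₀ ≺≻ f x₀` starts a Jungck sequence
`g (x (n + 1)) = f (x n)`. Its `g`-images form a termwise monotone sequence whose steps shrink
geometrically, so they converge to some `z`, and so do the `f`-images. Compatibility and continuity of `g` send `f (g (x n))` to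
`g z`; continuity of `f`, or the contraction along the comparable subsequence supplied by `g`-TCC,
sends it to `f z`. -/

theorem exists_seq_apply_succ_eq {X : Type*} {f g : X → X} (h : Set.range f ⊆ Set.range g)
    (x₀ : X) : ∃ x : ℕ → X, x 0 = x₀ ∧ ∀ n, g (x (n + 1)) = f (x n) := by
  choose G hG using fun a => h (Set.mem_range_self a)
  exact ⟨fun n => Nat.rec x₀ (fun _ p => G p) n, rfl, fun n => hG _⟩

theorem GComparable.cmp_seq {X : Type*} [PartialOrder X] {f g : X → X} {x : ℕ → X}
    (h : GComparable f g) (hx : ∀ n, g (x (n + 1)) = f (x n)) (h0 : Cmp (g (x 0)) (f (x 0)))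
    (n : ℕ) : Cmp (g (x n)) (g (x (n + 1))) := by
  induction n with
  | zero => rwa [hx 0]
  | succ n ih => rw [hx (n + 1), hx n]; exact h _ _ ih

theorem Compatible.tendsto_apply_comp {X : Type*} [MetricSpace X] {f g : X → X} {x : ℕ → X}
    {z : X} (h : Compatible f g) (hg : Continuous g) (hgx : Tendsto (fun n => g (x n)) atTop (𝓝 z))
    (hfx : Tendsto (fun n => f (x n)) atTop (𝓝 z)) :
    Tendsto (fun n => f (g (x n))) atTop (𝓝 (g z)) :=
  tendsto_of_tendsto_of_dist ((hg.tendsto z).comp hfx) (h x z hgx hfx)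

def CmpContraction {X : Type*} [MetricSpace X] [PartialOrder X] (f g : X → X) (α : ℝ) : Prop :=
  ∀ x y : X, Cmp (g x) (g y) → dist (f x) (f y) ≤ α * dist (g x) (g y)

namespace CmpContraction

variable {X : Type*} [MetricSpace X] [PartialOrder X] {f g : X → X} {α : ℝ} {x : ℕ → X}

theorem dist_seq_le_geometric (hfg : CmpContraction f g α) (hα : 0 ≤ α)
    (hx : ∀ n, g (x (n + 1)) = f (x n)) (hcmp : ∀ n, Cmp (g (x n)) (g (x (n + 1)))) (n : ℕ) :
    dist (g (x n)) (g (x (n + 1))) ≤ dist (g (x 0)) (g (x 1)) * α ^ n := by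
  induction n with
  | zero => simp
  | succ n ih =>
    calc dist (g (x (n + 1))) (g (x (n + 1 + 1)))
        ≤ α * dist (g (x n)) (g (x (n + 1))) := by
          simpa only [hx] using hfg _ _ (hcmp n)
      _ ≤ α * (dist (g (x 0)) (g (x 1)) * α ^ n) := mul_le_mul_of_nonneg_left ih hα
      _ = dist (g (x 0)) (g (x 1)) * α ^ (n + 1) := by ring

theorem exists_tendsto_seq [CompleteSpace X] (hfg : CmpContraction f g α) (hα0 : 0 ≤ α)
    (hα1 : α < 1) (hx : ∀ n, g (x (n + 1)) = f (x n))
    (hcmp : ∀ n, Cmp (g (x n)) (g (x (n + 1)))) :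
    ∃ z, Tendsto (fun n => g (x n)) atTop (𝓝 z) ∧ Tendsto (fun n => f (x n)) atTop (𝓝 z) := by
  obtain ⟨z, hz⟩ := cauchySeq_tendsto_of_complete <|
    cauchySeq_of_le_geometric α _ hα1 (hfg.dist_seq_le_geometric hα0 hx hcmp)
  exact ⟨z, hz, (hz.comp (tendsto_add_atTop_nat 1)).congr hx⟩

theorem tendsto_apply {ι : Type*} {l : Filter ι} {y : ι → X} {z : X}
    (hfg : CmpContraction f g α) (hcmp : ∀ i, Cmp (g (y i)) (g z))
    (hy : Tendsto (fun i => g (y i)) l (𝓝 (g z))) :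
    Tendsto (fun i => f (y i)) l (𝓝 (f z)) := by
  refine tendsto_iff_dist_tendsto_zero.mpr <|
    squeeze_zero (fun _ => dist_nonneg) (fun i => hfg _ _ (hcmp i)) ?_
  simpa using (tendsto_iff_dist_tendsto_zero.mp hy).const_mul α

end CmpContraction

/-- Theorem 3.3 (coincidence point, compatible pair). -/
theorem stmt0 {X : Type*} [MetricSpace X] [PartialOrder X] [CompleteSpace X]
    (f g : X → X)
    (h1 : Set.range f ⊆ Set.range g)
    (h2 : GComparable f g)
    (h3 : Compatible f g)
    (h4 : Continuous g)
    (h5 : Continuous f ∨ GTCC g)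
    (h6 : ∃ x₀ : X, Cmp (g x₀) (f x₀))
    (h7 : ∃ α : ℝ, 0 ≤ α ∧ α < 1 ∧
      ∀ x y : X, Cmp (g x) (g y) → dist (f x) (f y) ≤ α * dist (g x) (g y)) :
    ∃ z : X, g z = f z := by
  obtain ⟨x₀, hx₀⟩ := h6
  obtain ⟨α, hα0, hα1, hcon⟩ := h7
  obtain ⟨x, rfl, hx⟩ := exists_seq_apply_succ_eq h1 x₀
  have hcmp := h2.cmp_seq hx hx₀
  obtain ⟨z, hgz, hfz⟩ := CmpContraction.exists_tendsto_seq hcon hα0 hα1 hx hcmp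
  have hfgz := h3.tendsto_apply_comp h4 hgz hfz
  refine ⟨z, ?_⟩
  rcases h5 with hf | htcc
  · exact tendsto_nhds_unique hfgz ((hf.tendsto z).comp hgz)
  · obtain ⟨φ, hφ, hφcmp⟩ := htcc _ z hcmp hgz
    exact tendsto_nhds_unique (hfgz.comp hφ.tendsto_atTop) <|
      CmpContraction.tendsto_apply hcon hφcmp ((h4.tendsto z).comp (hgz.comp hφ.tendsto_atTop))
end

section
/- Let (X, d, ≤) be an ordered metric space with (X, d) complete, and let f, g be self-maps on X such that: (i) f(X) ⊆ g(X); (ii) f is g-comparable; (iii) the pair (f, g) is weakly commuting; (iv) g is continuous; (v) either f is continuous or (X, d, ≤) has the g-TCC property; (vi) there exists x₀ ∈ X with g(x₀) ≺≻ f(x₀); (vii) there exists α ∈ [0,1) such that d(f(x), f(y)) ≤ α·d(g(x), g(y)) for all x, y ∈ X with g(x) ≺≻ g(y). Then f and g have a coincidence point, i.e., there exists z ∈ X with g(z) = f(z). -/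
open Filter Topology

/-!
Jungck's iteration `g xₙ₊₁ = f xₙ`, started at a point with `g x₀ ≺≻ f x₀`, stays termwise
comparable because `f` is `g`-comparable, so the contraction makes `(g xₙ)` geometrically Cauchy.
Its limit `z` is also the limit of `f xₙ = g xₙ₊₁`, and weak commutativity then forces
`f (g xₙ) → g z`. If `f` is continuous, also `f (g xₙ) → f z`. Under the `g`-TCC property some
subsequence has `g (g xₙ) ≺≻ g z`, and along it the contraction gives `f (g xₙ) → f z`.
Either way `g z = f z`.
-/

section

variable {X : Type*} {f g : X → X}

def WeaklyCommuting [PseudoMetricSpace X] (f g : X → X) : Prop :=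
  ∀ x, dist (g (f x)) (f (g x)) ≤ dist (g x) (f x)

theorem exists_seq_map_succ_eq (h : Set.range f ⊆ Set.range g) (x₀ : X) :
    ∃ x : ℕ → X, x 0 = x₀ ∧ ∀ n, g (x (n + 1)) = f (x n) := by
  choose next hnext using fun a => h ⟨a, rfl⟩
  exact ⟨fun n => next^[n] x₀, rfl, fun n => by
    simp only [Function.iterate_succ_apply', hnext]⟩

theorem cmp_map_seq_succ [PartialOrder X] (hfg : GComparable f g) {x : ℕ → X}
    (hx : ∀ n, g (x (n + 1)) = f (x n)) (h₀ : Cmp (g (x 0)) (f (x 0))) :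
    ∀ n, Cmp (g (x n)) (g (x (n + 1)))
  | 0 => by rw [hx 0]; exact h₀
  | n + 1 => by rw [hx (n + 1), hx n]; exact hfg _ _ (cmp_map_seq_succ hfg hx h₀ n)

theorem cauchySeq_map_seq [PseudoMetricSpace X] [PartialOrder X] {α : ℝ}
    (hα₀ : 0 ≤ α) (hα₁ : α < 1)
    (hf : ∀ a b, Cmp (g a) (g b) → dist (f a) (f b) ≤ α * dist (g a) (g b))
    {x : ℕ → X} (hx : ∀ n, g (x (n + 1)) = f (x n))
    (hcmp : ∀ n, Cmp (g (x n)) (g (x (n + 1)))) : CauchySeq (g ∘ x) := by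
  refine cauchySeq_of_le_geometric α (dist (g (x 0)) (g (x 1))) hα₁ fun n => ?_
  induction n with
  | zero => simp
  | succ n ih =>
    calc dist (g (x (n + 1))) (g (x (n + 2)))
        = dist (f (x n)) (f (x (n + 1))) := by rw [hx, hx]
      _ ≤ α * dist (g (x n)) (g (x (n + 1))) := hf _ _ (hcmp n)
      _ ≤ α * (dist (g (x 0)) (g (x 1)) * α ^ n) := mul_le_mul_of_nonneg_left ih hα₀
      _ = dist (g (x 0)) (g (x 1)) * α ^ (n + 1) := by ring

theorem tendsto_map_of_cmp_contraction [PseudoMetricSpace X] [PartialOrder X] {α : ℝ}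
    (hf : ∀ a b, Cmp (g a) (g b) → dist (f a) (f b) ≤ α * dist (g a) (g b))
    {y : ℕ → X} {z : X} (hy : Tendsto (g ∘ y) atTop (𝓝 (g z)))
    (hcmp : ∀ n, Cmp (g (y n)) (g z)) : Tendsto (f ∘ y) atTop (𝓝 (f z)) := by
  rw [tendsto_iff_dist_tendsto_zero] at hy ⊢
  refine squeeze_zero (fun _ => dist_nonneg) (fun n => hf _ _ (hcmp n)) ?_
  simpa using hy.const_mul α

theorem WeaklyCommuting.tendsto_comp_map [PseudoMetricSpace X] (hfg : WeaklyCommuting f g)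
    (hg : Continuous g) {x : ℕ → X} {z : X} (hgx : Tendsto (g ∘ x) atTop (𝓝 z))
    (hfx : Tendsto (f ∘ x) atTop (𝓝 z)) : Tendsto (f ∘ g ∘ x) atTop (𝓝 (g z)) := by
  have hdist : Tendsto (fun n => dist (g (x n)) (f (x n))) atTop (𝓝 0) := by
    simpa using hgx.dist hfx
  exact ((hg.tendsto z).comp hfx).congr_dist
    (squeeze_zero (fun _ => dist_nonneg) (fun n => hfg (x n)) hdist)

end

/-- Corollary 3.4 (coincidence point, weakly commuting pair). -/
theorem stmt1 {X : Type*} [MetricSpace X] [PartialOrder X] [CompleteSpace X]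
    (f g : X → X)
    (h1 : Set.range f ⊆ Set.range g)
    (h2 : GComparable f g)
    (h3 : ∀ x : X, dist (g (f x)) (f (g x)) ≤ dist (g x) (f x))
    (h4 : Continuous g)
    (h5 : Continuous f ∨ GTCC g)
    (h6 : ∃ x₀ : X, Cmp (g x₀) (f x₀))
    (h7 : ∃ α : ℝ, 0 ≤ α ∧ α < 1 ∧
      ∀ x y : X, Cmp (g x) (g y) → dist (f x) (f y) ≤ α * dist (g x) (g y)) :
    ∃ z : X, g z = f z := by
  obtain ⟨x₀, hx₀⟩ := h6
  obtain ⟨α, hα₀, hα₁, hcon⟩ := h7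
  obtain ⟨x, rfl, hx⟩ := exists_seq_map_succ_eq h1 x₀
  have hcmp := cmp_map_seq_succ h2 hx hx₀
  obtain ⟨z, hgx⟩ := cauchySeq_tendsto_of_complete (cauchySeq_map_seq hα₀ hα₁ hcon hx hcmp)
  have hfx : Tendsto (f ∘ x) atTop (𝓝 z) := (hgx.comp (tendsto_add_atTop_nat 1)).congr hx
  have hfgx : Tendsto (f ∘ g ∘ x) atTop (𝓝 (g z)) :=
    WeaklyCommuting.tendsto_comp_map h3 h4 hgx hfx
  refine ⟨z, ?_⟩
  rcases h5 with hf | htcc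
  · exact tendsto_nhds_unique hfgx ((hf.tendsto z).comp hgx)
  · obtain ⟨φ, hφ, hφcmp⟩ := htcc (g ∘ x) z hcmp hgx
    exact tendsto_nhds_unique (hfgx.comp hφ.tendsto_atTop) <|
      tendsto_map_of_cmp_contraction hcon ((h4.tendsto z).comp (hgx.comp hφ.tendsto_atTop))
        hφcmp
end

section
/- Let (X, d, ≤) be an ordered metric space with (X, d) complete, and let f, g be self-maps on X such that: (i) f(X) ⊆ g(X); (ii) f is g-comparable; (iii) the pair (f, g) is compatible; (iv) g is continuous; (v) either f is continuous or (X, d, ≤) has the g-TCC property; (vi) there exists x₀ ∈ X with g(x₀) ≺≻ f(x₀); (vii) there exists α ∈ [0,1) such that d(f(x), f(y)) ≤ α·d(g(x), g(y)) for all x, y ∈ X with g(x) ≺≻ g(y); (u₀) for each x, y ∈ X, the set C(f(x), f(y), ≺≻, g(X)) of ≺≻-chains between f(x) and f(y) in g(X) is nonempty. Then f and g have a unique common fixed point. -/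
open Filter Topology

/-!
Iterate Jungck's scheme `g xₙ₊₁ = f xₙ` from `x₀`. Comparability propagates along the scheme
and `f` contracts `g`-distances of comparable points, so `g xₙ` is Cauchy; its limit `z` is a
coincidence point (`f z = g z`) by compatibility together with continuity of `f` or the
`g`-TCC property. Compatibility makes `f` and `g` commute at `z`, so `g z` is a coincidence point
as well. Finally, running the scheme along a `≺≻`-chain joining two coincidence values contracts
every link, while the endpoints stay put: coincidence values are unique, whence `g z` is the
unique common fixed point.
-/

open Filter Topology

section

variable {X : Type*} {f g s : X → X} {α : ℝ}

section Order

variable [PartialOrder X]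

theorem Cmp.refl (x : X) : Cmp x x := Or.inl le_rfl

theorem GComparable.cmp_iterate (hfg : GComparable f g) (hs : ∀ a, g (s a) = f a) {a b : X}
    (hab : Cmp (g a) (g b)) (n : ℕ) : Cmp (g (s^[n] a)) (g (s^[n] b)) := by
  induction n with
  | zero => exact hab
  | succ n ih =>
    rw [Function.iterate_succ_apply', Function.iterate_succ_apply', hs, hs]
    exact hfg _ _ ih

theorem GComparable.cmp_iterate_succ (hfg : GComparable f g) (hs : ∀ a, g (s a) = f a) {a : X}
    (ha : Cmp (g a) (f a)) (n : ℕ) : Cmp (g (s^[n] a)) (g (s^[n + 1] a)) := by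
  rw [Function.iterate_succ_apply]
  exact hfg.cmp_iterate hs (by rwa [hs]) n

end Order

section Compatible

variable [MetricSpace X]

theorem Compatible.tendsto_f_comp_g (hcompat : Compatible f g) (hg : Continuous g) {x : ℕ → X}
    {z : X} (hgx : Tendsto (fun n => g (x n)) atTop (𝓝 z))
    (hfx : Tendsto (fun n => f (x n)) atTop (𝓝 z)) :
    Tendsto (fun n => f (g (x n))) atTop (𝓝 (g z)) :=
  ((hg.tendsto z).comp hfx).congr_dist (hcompat x z hgx hfx)

theorem Compatible.comm_of_coincidence (hcompat : Compatible f g) {z : X} (hz : f z = g z) :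
    g (f z) = f (g z) := by
  have h := hcompat (fun _ => z) (f z) (hz ▸ tendsto_const_nhds) tendsto_const_nhds
  exact dist_eq_zero.mp (tendsto_nhds_unique tendsto_const_nhds h)

end Compatible

variable [MetricSpace X] [PartialOrder X]

def IsGContraction (f g : X → X) (α : ℝ) : Prop :=
  ∀ x y : X, Cmp (g x) (g y) → dist (f x) (f y) ≤ α * dist (g x) (g y)

namespace IsGContraction

theorem eq_of_g_eq (hc : IsGContraction f g α) {a b : X} (hab : g a = g b) :
    f a = f b := by
  have h := hc a b (hab ▸ Cmp.refl _)
  rw [hab, dist_self, mul_zero] at h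
  exact dist_le_zero.mp h

theorem g_iterate_congr (hc : IsGContraction f g α) (hs : ∀ a, g (s a) = f a)
    {a b : X} (hab : g a = g b) (n : ℕ) : g (s^[n] a) = g (s^[n] b) := by
  induction n with
  | zero => exact hab
  | succ n ih =>
    rw [Function.iterate_succ_apply', Function.iterate_succ_apply', hs, hs]
    exact hc.eq_of_g_eq ih

theorem g_iterate_of_coincidence (hc : IsGContraction f g α) (hs : ∀ a, g (s a) = f a)
    {a : X} (ha : g a = f a) (n : ℕ) : g (s^[n] a) = g a := by
  induction n with
  | zero => rfl
  | succ n ih =>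
    rw [Function.iterate_succ_apply, hc.g_iterate_congr hs (b := a) (by rw [hs, ha]) n, ih]

theorem dist_iterate_le (hc : IsGContraction f g α) (hs : ∀ a, g (s a) = f a)
    (hα0 : 0 ≤ α) (hfg : GComparable f g) {a b : X} (hab : Cmp (g a) (g b)) (n : ℕ) :
    dist (g (s^[n] a)) (g (s^[n] b)) ≤ α ^ n * dist (g a) (g b) := by
  induction n with
  | zero => simp
  | succ n ih =>
    rw [Function.iterate_succ_apply', Function.iterate_succ_apply', hs, hs]
    calc dist (f (s^[n] a)) (f (s^[n] b))
        ≤ α * dist (g (s^[n] a)) (g (s^[n] b)) := hc _ _ (hfg.cmp_iterate hs hab n)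
      _ ≤ α * (α ^ n * dist (g a) (g b)) := mul_le_mul_of_nonneg_left ih hα0
      _ = α ^ (n + 1) * dist (g a) (g b) := by ring

theorem tendsto_dist_iterate_of_cmp (hc : IsGContraction f g α) (hs : ∀ a, g (s a) = f a)
    (hα0 : 0 ≤ α) (hα1 : α < 1) (hfg : GComparable f g) {a b : X} (hab : Cmp (g a) (g b)) :
    Tendsto (fun n => dist (g (s^[n] a)) (g (s^[n] b))) atTop (𝓝 0) := by
  have hpow := (tendsto_pow_atTop_nhds_zero_of_lt_one hα0 hα1).mul_const (dist (g a) (g b))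
  rw [zero_mul] at hpow
  exact squeeze_zero (fun _ => dist_nonneg) (hc.dist_iterate_le hs hα0 hfg hab) hpow

theorem tendsto_dist_iterate_of_chain (hc : IsGContraction f g α) (hs : ∀ a, g (s a) = f a)
    (hα0 : 0 ≤ α) (hα1 : α < 1) (hfg : GComparable f g) {a b : X} (hab : ChainIn (Set.range g) (g a) (g b)) :
    Tendsto (fun n => dist (g (s^[n] a)) (g (s^[n] b))) atTop (𝓝 0) := by
  obtain ⟨k, e, hk, he, he0, hek, hlink⟩ := hab
  have hpre : ∀ i, ∃ c, i < k → g c = e i := fun i =>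
    if hi : i < k then (he i hi).imp fun _ hc _ => hc else ⟨a, fun h => absurd h hi⟩
  choose w hw using hpre
  have hw0 : g (w 0) = g a := by rw [hw 0 (by omega), he0]
  have hwk : g (w (k - 1)) = g b := by rw [hw (k - 1) (by omega), hek]
  have hlinks : Tendsto (fun n => ∑ i ∈ Finset.range (k - 1),
      dist (g (s^[n] (w i))) (g (s^[n] (w (i + 1))))) atTop (𝓝 0) := by
    rw [← Finset.sum_const_zero (s := Finset.range (k - 1))]
    refine tendsto_finsetSum _ fun i hi => hc.tendsto_dist_iterate_of_cmp hs hα0 hα1 hfg ?_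
    have hi : i + 1 < k := by rw [Finset.mem_range] at hi; omega
    rw [hw i (by omega), hw (i + 1) hi]
    exact hlink i hi
  refine squeeze_zero (fun _ => dist_nonneg) (fun n => ?_) hlinks
  rw [← hc.g_iterate_congr hs hw0, ← hc.g_iterate_congr hs hwk]
  exact dist_le_range_sum_dist (fun i => g (s^[n] (w i))) (k - 1)

theorem cauchySeq_iterate (hc : IsGContraction f g α) (hs : ∀ a, g (s a) = f a)
    (hα0 : 0 ≤ α) (hα1 : α < 1) (hfg : GComparable f g) {a : X} (ha : Cmp (g a) (f a)) :
    CauchySeq fun n => g (s^[n] a) := by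
  refine cauchySeq_of_le_geometric α (dist (g a) (f a)) hα1 fun n => ?_
  rw [Function.iterate_succ_apply, mul_comm, ← hs a]
  exact hc.dist_iterate_le hs hα0 hfg (by rwa [hs]) n

theorem coincidence_value_unique (hc : IsGContraction f g α) (hα0 : 0 ≤ α)
    (hα1 : α < 1) (hfg : GComparable f g) (hrange : Set.range f ⊆ Set.range g)
    (hchain : ∀ x y : X, ChainIn (Set.range g) (f x) (f y)) {a b : X} (ha : g a = f a)
    (hb : g b = f b) : g a = g b := by
  choose s hs using fun x => hrange ⟨x, rfl⟩
  have hlim := hc.tendsto_dist_iterate_of_chain hs hα0 hα1 hfg (a := a) (b := b)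
    (by rw [ha, hb]; exact hchain a b)
  simp only [hc.g_iterate_of_coincidence hs ha, hc.g_iterate_of_coincidence hs hb] at hlim
  exact dist_eq_zero.mp (tendsto_nhds_unique tendsto_const_nhds hlim)

theorem tendsto_subseq_of_gTCC (hc : IsGContraction f g α) (htcc : GTCC g)
    (hg : Continuous g) {y : ℕ → X} {z : X} (hy : ∀ n, Cmp (y n) (y (n + 1)))
    (hyz : Tendsto y atTop (𝓝 z)) :
    ∃ φ : ℕ → ℕ, StrictMono φ ∧ Tendsto (fun k => f (y (φ k))) atTop (𝓝 (f z)) := by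
  obtain ⟨φ, hφ, hcmp⟩ := htcc y z hy hyz
  have hgy := tendsto_iff_dist_tendsto_zero.mp ((hg.tendsto z).comp (hyz.comp hφ.tendsto_atTop))
  refine ⟨φ, hφ, tendsto_iff_dist_tendsto_zero.mpr ?_⟩
  refine squeeze_zero (fun _ => dist_nonneg) (fun k => hc _ _ (hcmp k)) ?_
  simpa using hgy.const_mul α

theorem exists_coincidence [CompleteSpace X] (hc : IsGContraction f g α)
    (hα0 : 0 ≤ α) (hα1 : α < 1) (hfg : GComparable f g) (hcompat : Compatible f g)
    (hg : Continuous g) (hf : Continuous f ∨ GTCC g) (hrange : Set.range f ⊆ Set.range g)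
    {x₀ : X} (hx₀ : Cmp (g x₀) (f x₀)) : ∃ z, f z = g z := by
  choose s hs using fun x => hrange ⟨x, rfl⟩
  obtain ⟨z, hgz⟩ := cauchySeq_tendsto_of_complete (hc.cauchySeq_iterate hs hα0 hα1 hfg hx₀)
  have hfz : Tendsto (fun n => f (s^[n] x₀)) atTop (𝓝 z) := by
    have hshift := hgz.comp (tendsto_add_atTop_nat 1)
    simpa only [Function.comp_def, Function.iterate_succ_apply', hs] using hshift
  have hfgz := hcompat.tendsto_f_comp_g hg hgz hfz
  refine ⟨z, ?_⟩
  rcases hf with hf | htcc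
  · exact tendsto_nhds_unique ((hf.tendsto z).comp hgz) hfgz
  · obtain ⟨φ, hφ, hlim⟩ :=
      hc.tendsto_subseq_of_gTCC htcc hg (hfg.cmp_iterate_succ hs hx₀) hgz
    exact tendsto_nhds_unique hlim (hfgz.comp hφ.tendsto_atTop)

end IsGContraction

end

/-- Theorem 4.6 (unique common fixed point, compatible pair). -/
theorem stmt9 {X : Type*} [MetricSpace X] [PartialOrder X] [CompleteSpace X]
    (f g : X → X)
    (h1 : Set.range f ⊆ Set.range g)
    (h2 : GComparable f g)
    (h3 : Compatible f g)
    (h4 : Continuous g)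
    (h5 : Continuous f ∨ GTCC g)
    (h6 : ∃ x₀ : X, Cmp (g x₀) (f x₀))
    (h7 : ∃ α : ℝ, 0 ≤ α ∧ α < 1 ∧
      ∀ x y : X, Cmp (g x) (g y) → dist (f x) (f y) ≤ α * dist (g x) (g y))
    (hu0 : ∀ x y : X, ChainIn (Set.range g) (f x) (f y)) :
    ∃! x : X, g x = x ∧ f x = x := by
  obtain ⟨α, hα0, hα1, hc⟩ := h7
  obtain ⟨x₀, hx₀⟩ := h6
  obtain ⟨z, hz⟩ := IsGContraction.exists_coincidence hc hα0 hα1 h2 h3 h4 h5 h1 hx₀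
  have hunique : ∀ {a b}, g a = f a → g b = f b → g a = g b :=
    IsGContraction.coincidence_value_unique hc hα0 hα1 h2 h1 hu0
  have hgz : g (g z) = f (g z) := by rw [← h3.comm_of_coincidence hz, hz]
  have hfix : g (g z) = g z := (hunique hz.symm hgz).symm
  refine ⟨g z, ⟨hfix, hgz ▸ hfix⟩, fun y ⟨hgy, hfy⟩ => ?_⟩
  have hy := hunique (hgy.trans hfy.symm) hgz
  rwa [hgy, hfix] at hy
end

section
/- Let (X, d, ≤) be an ordered metric space with (X, d) complete, and let f be a self-map on X such that: (a) f is comparable; (b) either f is continuous or (X, d, ≤) has the TCC property; (c) there exists x₀ ∈ X with x₀ ≺≻ f(x₀); (d) there exists α ∈ [0,1) such that d(f(x), f(y)) ≤ α·d(x, y) for all x, y ∈ X with x ≺≻ y. Then f has a fixed point. -/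
open Filter Topology

/-! Since `f` preserves comparability, the Picard iterates of `x₀` form a termwise monotone
sequence, so the contraction applies to consecutive terms and they converge geometrically to
some `l`. If `f` is continuous, `l` is fixed. Otherwise TCC gives a subsequence comparable to
`l`, along which the contraction forces `f (xₙ) → f l`, while `f (xₙ) = xₙ₊₁ → l`. -/

section

variable {X : Type*} [PartialOrder X] {f : X → X}

theorem cmp_iterate_succ (hf : ∀ x y : X, Cmp x y → Cmp (f x) (f y)) {x₀ : X}
    (h₀ : Cmp x₀ (f x₀)) (n : ℕ) : Cmp (f^[n] x₀) (f^[n + 1] x₀) := by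
  induction n with
  | zero => exact h₀
  | succ n ih =>
    simpa only [Function.iterate_succ_apply'] using hf _ _ ih

variable [MetricSpace X]

theorem dist_iterate_succ_le_geometric (hf : ∀ x y : X, Cmp x y → Cmp (f x) (f y))
    {α : ℝ} (hα : 0 ≤ α) (hcontr : ∀ x y : X, Cmp x y → dist (f x) (f y) ≤ α * dist x y)
    {x₀ : X} (h₀ : Cmp x₀ (f x₀)) (n : ℕ) :
    dist (f^[n] x₀) (f^[n + 1] x₀) ≤ dist x₀ (f x₀) * α ^ n := by
  induction n with
  | zero => simp
  | succ n ih =>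
    calc dist (f^[n + 1] x₀) (f^[n + 2] x₀)
        = dist (f (f^[n] x₀)) (f (f^[n + 1] x₀)) := by
          simp only [Function.iterate_succ_apply']
      _ ≤ α * dist (f^[n] x₀) (f^[n + 1] x₀) := hcontr _ _ (cmp_iterate_succ hf h₀ n)
      _ ≤ α * (dist x₀ (f x₀) * α ^ n) := mul_le_mul_of_nonneg_left ih hα
      _ = dist x₀ (f x₀) * α ^ (n + 1) := by ring

theorem exists_tendsto_iterate [CompleteSpace X] (hf : ∀ x y : X, Cmp x y → Cmp (f x) (f y))
    {α : ℝ} (hα₀ : 0 ≤ α) (hα₁ : α < 1)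
    (hcontr : ∀ x y : X, Cmp x y → dist (f x) (f y) ≤ α * dist x y)
    {x₀ : X} (h₀ : Cmp x₀ (f x₀)) : ∃ l, Tendsto (fun n ↦ f^[n] x₀) atTop (𝓝 l) :=
  cauchySeq_tendsto_of_complete <|
    cauchySeq_of_le_geometric α _ hα₁ (dist_iterate_succ_le_geometric hf hα₀ hcontr h₀)

theorem tendsto_comp_of_cmp {α : ℝ}
    (hcontr : ∀ x y : X, Cmp x y → dist (f x) (f y) ≤ α * dist x y)
    {u : ℕ → X} {l : X} (hu : Tendsto u atTop (𝓝 l)) (hcmp : ∀ k, Cmp (u k) l) :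
    Tendsto (f ∘ u) atTop (𝓝 (f l)) := by
  rw [tendsto_iff_dist_tendsto_zero] at hu ⊢
  have hbound : Tendsto (fun k ↦ α * dist (u k) l) atTop (𝓝 0) := by
    simpa using hu.const_mul α
  exact squeeze_zero (fun _ ↦ dist_nonneg) (fun k ↦ hcontr _ _ (hcmp k)) hbound

theorem isFixedPt_of_tendsto_iterate_of_tcc (htcc : TCC X)
    (hf : ∀ x y : X, Cmp x y → Cmp (f x) (f y)) {α : ℝ}
    (hcontr : ∀ x y : X, Cmp x y → dist (f x) (f y) ≤ α * dist x y)
    {x₀ l : X} (h₀ : Cmp x₀ (f x₀)) (hl : Tendsto (fun n ↦ f^[n] x₀) atTop (𝓝 l)) :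
    Function.IsFixedPt f l := by
  obtain ⟨φ, hφ, hcmp⟩ := htcc _ l (cmp_iterate_succ hf h₀) hl
  have hsub : Tendsto (fun k ↦ f^[φ k] x₀) atTop (𝓝 l) := hl.comp hφ.tendsto_atTop
  have hsucc : Tendsto (fun k ↦ f (f^[φ k] x₀)) atTop (𝓝 l) := by
    simp only [← Function.iterate_succ_apply' f]
    exact (hl.comp (tendsto_add_atTop_nat 1)).comp hφ.tendsto_atTop
  exact tendsto_nhds_unique (tendsto_comp_of_cmp hcontr hsub hcmp) hsucc

end

/-- Corollary 5.1, existence part. -/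
theorem stmt12 {X : Type*} [MetricSpace X] [PartialOrder X] [CompleteSpace X]
    (f : X → X)
    (ha : ∀ x y : X, Cmp x y → Cmp (f x) (f y))
    (hb : Continuous f ∨ TCC X)
    (hc : ∃ x₀ : X, Cmp x₀ (f x₀))
    (hd : ∃ α : ℝ, 0 ≤ α ∧ α < 1 ∧
      ∀ x y : X, Cmp x y → dist (f x) (f y) ≤ α * dist x y) :
    ∃ x : X, f x = x := by
  obtain ⟨x₀, h₀⟩ := hc
  obtain ⟨α, hα₀, hα₁, hcontr⟩ := hd
  obtain ⟨l, hl⟩ := exists_tendsto_iterate ha hα₀ hα₁ hcontr h₀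
  refine ⟨l, ?_⟩
  rcases hb with hcont | htcc
  · exact isFixedPt_of_tendsto_iterate hl hcont.continuousAt
  · exact isFixedPt_of_tendsto_iterate_of_tcc htcc ha hcontr h₀ hl
end

section
/- (Ran–Reurings) Let (X, d, ≤) be an ordered metric space and f a self-map on X such that: (a) (X, d) is complete; (b) f is monotone (either increasing or decreasing); (c) f is continuous; (d) there exists x₀ ∈ X with x₀ ≺≻ f(x₀); (e) there exists α ∈ [0,1) such that d(f(x), f(y)) ≤ α·d(x, y) for all x, y ∈ X with x ≤ y; (f) every pair of elements of X has a lower bound and an upper bound. Then f has a unique fixed point x̄, and moreover for every x ∈ X the sequence of iterates fⁿ(x) converges to x̄. -/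
/-!
Comparability is preserved by the monotone map `f`, so along comparable pairs the
contraction estimate iterates to `d(fⁿx, fⁿy) ≤ αⁿ d(x, y)`. Applied to the comparable
pair `x₀, f x₀` this makes the orbit of `x₀` Cauchy, and its limit is a fixed point by
continuity. Any `x` and `x₀` share a lower bound `w`, which is comparable to both, so the
orbits of `x`, `w` and `x₀` merge; hence every orbit converges to the same limit, and a
fixed point, being its own orbit's limit, must equal it.
-/

open Filter Topology

section

variable {X : Type*} [PartialOrder X] {f : X → X} {x y : X}

theorem Cmp.apply (hf : Monotone f ∨ Antitone f) (h : Cmp x y) : Cmp (f x) (f y) := by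
  rcases hf with hf | hf <;> rcases h with h | h
  exacts [Or.inl (hf h), Or.inr (hf h), Or.inr (hf h), Or.inl (hf h)]

theorem Cmp.iterate (hf : Monotone f ∨ Antitone f) (h : Cmp x y) (n : ℕ) :
    Cmp (f^[n] x) (f^[n] y) := by
  induction n with
  | zero => exact h
  | succ n ih =>
    rw [Function.iterate_succ_apply', Function.iterate_succ_apply']
    exact ih.apply hf

variable [MetricSpace X] {α : ℝ}

theorem dist_apply_le_of_cmp (hcon : ∀ x y : X, x ≤ y → dist (f x) (f y) ≤ α * dist x y)
    (h : Cmp x y) : dist (f x) (f y) ≤ α * dist x y := by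
  rcases h with h | h
  · exact hcon x y h
  · rw [dist_comm x, dist_comm (f x)]
    exact hcon y x h

theorem dist_iterate_le_of_cmp (hf : Monotone f ∨ Antitone f) (hα : 0 ≤ α)
    (hcon : ∀ x y : X, x ≤ y → dist (f x) (f y) ≤ α * dist x y) (h : Cmp x y) (n : ℕ) :
    dist (f^[n] x) (f^[n] y) ≤ α ^ n * dist x y := by
  induction n with
  | zero => simp
  | succ n ih =>
    rw [Function.iterate_succ_apply', Function.iterate_succ_apply']
    calc dist (f (f^[n] x)) (f (f^[n] y)) ≤ α * dist (f^[n] x) (f^[n] y) :=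
          dist_apply_le_of_cmp hcon (h.iterate hf n)
      _ ≤ α * (α ^ n * dist x y) := by gcongr
      _ = α ^ (n + 1) * dist x y := by ring

theorem tendsto_dist_iterate_of_cmp (hf : Monotone f ∨ Antitone f) (hα₀ : 0 ≤ α)
    (hα₁ : α < 1) (hcon : ∀ x y : X, x ≤ y → dist (f x) (f y) ≤ α * dist x y)
    (h : Cmp x y) : Tendsto (fun n => dist (f^[n] x) (f^[n] y)) atTop (𝓝 0) := by
  have hpow : Tendsto (fun n : ℕ => α ^ n * dist x y) atTop (𝓝 0) := by
    simpa using (tendsto_pow_atTop_nhds_zero_of_lt_one hα₀ hα₁).mul_const (dist x y)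
  exact squeeze_zero (fun _ => dist_nonneg)
    (dist_iterate_le_of_cmp hf hα₀ hcon h) hpow

theorem tendsto_dist_iterate_of_exists_lowerBound (hf : Monotone f ∨ Antitone f) (hα₀ : 0 ≤ α)
    (hα₁ : α < 1) (hcon : ∀ x y : X, x ≤ y → dist (f x) (f y) ≤ α * dist x y)
    (hlow : ∃ w, w ≤ x ∧ w ≤ y) :
    Tendsto (fun n => dist (f^[n] x) (f^[n] y)) atTop (𝓝 0) := by
  obtain ⟨w, hwx, hwy⟩ := hlow
  have hxw := tendsto_dist_iterate_of_cmp hf hα₀ hα₁ hcon (Or.inr hwx : Cmp x w)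
  have hwy := tendsto_dist_iterate_of_cmp hf hα₀ hα₁ hcon (Or.inl hwy : Cmp w y)
  refine squeeze_zero (fun _ => dist_nonneg) (fun n => dist_triangle _ (f^[n] w) _) ?_
  simpa using hxw.add hwy

theorem cauchySeq_iterate_of_cmp_apply (hf : Monotone f ∨ Antitone f) (hα₀ : 0 ≤ α)
    (hα₁ : α < 1) (hcon : ∀ x y : X, x ≤ y → dist (f x) (f y) ≤ α * dist x y)
    (hx : Cmp x (f x)) : CauchySeq fun n => f^[n] x := by
  refine cauchySeq_of_le_geometric α (dist x (f x)) hα₁ fun n => ?_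
  rw [Function.iterate_succ_apply, mul_comm]
  exact dist_iterate_le_of_cmp hf hα₀ hcon hx n

end

/-- Theorem 1.1 (Ran–Reurings). -/
theorem stmt14 {X : Type*} [MetricSpace X] [PartialOrder X] [CompleteSpace X]
    (f : X → X)
    (hb : Monotone f ∨ Antitone f)
    (hc : Continuous f)
    (hd : ∃ x₀ : X, Cmp x₀ (f x₀))
    (he : ∃ α : ℝ, 0 ≤ α ∧ α < 1 ∧
      ∀ x y : X, x ≤ y → dist (f x) (f y) ≤ α * dist x y)
    (hf : ∀ x y : X, (∃ z : X, z ≤ x ∧ z ≤ y) ∧ (∃ w : X, x ≤ w ∧ y ≤ w)) :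
    ∃ z : X, f z = z ∧ (∀ w : X, f w = w → w = z) ∧
      ∀ x : X, Tendsto (fun n => f^[n] x) atTop (𝓝 z) := by
  obtain ⟨α, hα₀, hα₁, hcon⟩ := he
  obtain ⟨x₀, hx₀⟩ := hd
  obtain ⟨z, hz⟩ := cauchySeq_tendsto_of_complete
    (cauchySeq_iterate_of_cmp_apply hb hα₀ hα₁ hcon hx₀)
  have hconv : ∀ x, Tendsto (fun n => f^[n] x) atTop (𝓝 z) := fun x =>
    tendsto_of_tendsto_of_dist hz <|
      tendsto_dist_iterate_of_exists_lowerBound hb hα₀ hα₁ hcon (hf x₀ x).1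
  refine ⟨z, isFixedPt_of_tendsto_iterate hz hc.continuousAt, fun w hw => ?_, hconv⟩
  have hconst : (fun n => f^[n] w) = fun _ => w := funext (Function.IsFixedPt.iterate hw)
  exact tendsto_nhds_unique tendsto_const_nhds (hconst ▸ hconv w)
end

section
/- (Turinici) Let (X, d, ≤) be an ordered metric space and f a self-map on X such that: (a) (X, d) is complete; (b) for all x, y ∈ X, x ≺≻ y implies f(x) ≺≻ f(y); (c) f is continuous; (d) there exists x₀ ∈ X with x₀ ≺≻ f(x₀); (e) there exists α ∈ [0,1) such that d(f(x), f(y)) ≤ α·d(x, y) for all x, y ∈ X with x ≤ y; (f) for each x, y ∈ X, the set C(x, y, ≺≻) of ≺≻-chains between x and y in X is nonempty. Then f has a unique fixed point z, and moreover for each x ∈ X the sequence of iterates fⁿ(x) converges to z. -/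
open Filter Topology

/-!
For comparable `a, b` the contraction condition, propagated by (b), gives
`d(fⁿ a, fⁿ b) ≤ αⁿ d(a, b)`; summing over the links of a chain, `d(fⁿ a, fⁿ b) ≤ C αⁿ` for all
`a, b`, with `C` depending on `a, b`. For `x₀ ≺≻ f x₀` this makes the orbit of `x₀` Cauchy; its
limit `z` is fixed by continuity, and taking `b = z` shows that every orbit converges to `z`,
which forces uniqueness.
-/

theorem ChainIn.reflTransGen {X : Type*} [PartialOrder X] {E : Set X} {a b : X}
    (h : ChainIn E a b) : Relation.ReflTransGen Cmp a b := by
  obtain ⟨k, e, -, -, rfl, rfl, hlink⟩ := h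
  have : ∀ j ≤ k - 1, Relation.ReflTransGen Cmp (e 0) (e j) := by
    intro j
    induction j with
    | zero => exact fun _ => .refl
    | succ j ih => exact fun hj => (ih (by omega)).tail (hlink j (by omega))
  exact this (k - 1) le_rfl

section Contraction

variable {X : Type*} [MetricSpace X] [PartialOrder X] {f : X → X} {α : ℝ}

theorem Cmp.dist_le (hf : ∀ x y : X, x ≤ y → dist (f x) (f y) ≤ α * dist x y) {x y : X}
    (h : Cmp x y) : dist (f x) (f y) ≤ α * dist x y := by
  rcases h with h | h
  · exact hf x y h
  · simpa only [dist_comm] using hf y x h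

theorem Cmp.dist_iterate_le (hmono : ∀ x y : X, Cmp x y → Cmp (f x) (f y)) (hα : 0 ≤ α)
    (hf : ∀ x y : X, x ≤ y → dist (f x) (f y) ≤ α * dist x y) {x y : X} (h : Cmp x y) (n : ℕ) :
    dist (f^[n] x) (f^[n] y) ≤ α ^ n * dist x y := by
  induction n generalizing x y with
  | zero => simp
  | succ n ih =>
    calc dist (f^[n + 1] x) (f^[n + 1] y) = dist (f^[n] (f x)) (f^[n] (f y)) := rfl
      _ ≤ α ^ n * dist (f x) (f y) := ih (hmono x y h)
      _ ≤ α ^ n * (α * dist x y) := by gcongr; exact h.dist_le hf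
      _ = α ^ (n + 1) * dist x y := by ring

theorem exists_dist_iterate_le_geometric (hmono : ∀ x y : X, Cmp x y → Cmp (f x) (f y))
    (hα : 0 ≤ α) (hf : ∀ x y : X, x ≤ y → dist (f x) (f y) ≤ α * dist x y) {a b : X}
    (h : Relation.ReflTransGen Cmp a b) : ∃ C, ∀ n, dist (f^[n] a) (f^[n] b) ≤ C * α ^ n := by
  induction h with
  | refl => exact ⟨0, fun n => by simp⟩
  | @tail b c _ hbc ih =>
    obtain ⟨C, hC⟩ := ih
    refine ⟨C + dist b c, fun n => ?_⟩
    calc dist (f^[n] a) (f^[n] c) ≤ dist (f^[n] a) (f^[n] b) + dist (f^[n] b) (f^[n] c) :=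
          dist_triangle _ _ _
      _ ≤ C * α ^ n + α ^ n * dist b c := add_le_add (hC n) (hbc.dist_iterate_le hmono hα hf n)
      _ = (C + dist b c) * α ^ n := by ring

theorem tendsto_dist_iterate_of_reflTransGen (hmono : ∀ x y : X, Cmp x y → Cmp (f x) (f y))
    (hα₀ : 0 ≤ α) (hα₁ : α < 1) (hf : ∀ x y : X, x ≤ y → dist (f x) (f y) ≤ α * dist x y)
    {a b : X} (h : Relation.ReflTransGen Cmp a b) :
    Tendsto (fun n => dist (f^[n] a) (f^[n] b)) atTop (𝓝 0) := by
  obtain ⟨C, hC⟩ := exists_dist_iterate_le_geometric hmono hα₀ hf h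
  refine squeeze_zero (fun n => dist_nonneg) hC ?_
  simpa using (tendsto_pow_atTop_nhds_zero_of_lt_one hα₀ hα₁).const_mul C

end Contraction

/-- Theorem 1.4 (Turinici, continuous case). -/
theorem stmt17 {X : Type*} [MetricSpace X] [PartialOrder X] [CompleteSpace X]
    (f : X → X)
    (hb : ∀ x y : X, Cmp x y → Cmp (f x) (f y))
    (hc : Continuous f)
    (hd : ∃ x₀ : X, Cmp x₀ (f x₀))
    (he : ∃ α : ℝ, 0 ≤ α ∧ α < 1 ∧
      ∀ x y : X, x ≤ y → dist (f x) (f y) ≤ α * dist x y)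
    (hf : ∀ x y : X, ChainIn (Set.univ : Set X) x y) :
    ∃ z : X, f z = z ∧ (∀ w : X, f w = w → w = z) ∧
      ∀ x : X, Tendsto (fun n => f^[n] x) atTop (𝓝 z) := by
  obtain ⟨α, hα₀, hα₁, hcontr⟩ := he
  have hdist : ∀ a b : X, Tendsto (fun n => dist (f^[n] a) (f^[n] b)) atTop (𝓝 0) := fun a b =>
    tendsto_dist_iterate_of_reflTransGen hb hα₀ hα₁ hcontr (hf a b).reflTransGen
  obtain ⟨x₀, hx₀⟩ := hd
  obtain ⟨C, hC⟩ := exists_dist_iterate_le_geometric hb hα₀ hcontr (.single hx₀)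
  obtain ⟨z, hz⟩ := cauchySeq_tendsto_of_complete <| cauchySeq_of_le_geometric α C hα₁ hC
  have hfz : f z = z := isFixedPt_of_tendsto_iterate hz hc.continuousAt
  have horbit : ∀ x : X, Tendsto (fun n => f^[n] x) atTop (𝓝 z) := fun x => by
    rw [tendsto_iff_dist_tendsto_zero]
    simpa only [Function.iterate_fixed hfz] using hdist x z
  refine ⟨z, hfz, fun w hw => dist_eq_zero.mp ?_, horbit⟩
  simpa only [Function.iterate_fixed hw, Function.iterate_fixed hfz, tendsto_const_nhds_iff]
    using hdist w z
end
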